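/- arXiv:1410.1728 — 3 statements merged into one kernel-verified Lean document; each statement's English description precedes it below -/
import Mathlib

section
/- For every nonnegative f in H¹((a,b)) and x < y in [a,b], one has |f(x)^{3/2} − f(y)^{3/2}| ≤ (3/2) |x−y|^{1/4} ‖f‖_{L²((a,b))}^{1/2} ‖f'‖_{L²((a,b))}. -/
open MeasureTheory

private lemma cs_sq {μ : Measure ℝ} {u v : ℝ → ℝ}
    (hu : 0 ≤ᵐ[μ] u) (hv : 0 ≤ᵐ[μ] v)
    (hum : MemLp u 2 μ) (hvm : MemLp v 2 μ) :
    ∫ t, u t * v t ∂μ ≤ (∫ t, u t ^ 2 ∂μ) ^ ((1:ℝ)/2) * (∫ t, v t ^ 2 ∂μ) ^ ((1:ℝ)/2) := by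
  have hpq : Real.HolderConjugate 2 2 := Real.holderConjugate_iff.2 ⟨by norm_num, by norm_num⟩
  have h2 : ENNReal.ofReal (2:ℝ) = 2 := by
    rw [show ((2:ℝ)) = ((2:ℕ):ℝ) by norm_num, ENNReal.ofReal_natCast]; norm_num
  have := MeasureTheory.integral_mul_le_Lp_mul_Lq_of_nonneg hpq hu hv (h2 ▸ hum) (h2 ▸ hvm)
  simpa [Real.rpow_two] using this

theorem power_three_half_holder_estimate (a b : ℝ) (hab : a < b) (f f' : ℝ → ℝ)
    (hf : ContinuousOn f (Set.Icc a b))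
    (hderiv : ∀ t ∈ Set.Ioo a b, HasDerivAt f (f' t) t)
    (hf2 : IntegrableOn (fun t => (f t) ^ 2) (Set.Icc a b))
    (hf'2 : IntegrableOn (fun t => (f' t) ^ 2) (Set.Icc a b))
    (hnonneg : ∀ t ∈ Set.Icc a b, 0 ≤ f t)
    (x y : ℝ) (hx : x ∈ Set.Icc a b) (hy : y ∈ Set.Icc a b) (hxy : x < y) :
    |f x ^ ((3:ℝ)/2) - f y ^ ((3:ℝ)/2)| ≤ (3/2) * |x - y| ^ ((1:ℝ)/4)
      * ((∫ t in a..b, (f t) ^ 2) ^ ((1:ℝ)/2)) ^ ((1:ℝ)/2)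
      * (∫ t in a..b, (f' t) ^ 2) ^ ((1:ℝ)/2) := by
  obtain ⟨hax, hxb⟩ := hx
  obtain ⟨hay, hyb⟩ := hy
  have hxy' : x ≤ y := hxy.le
  have hIccsub : Set.Icc x y ⊆ Set.Icc a b := Set.Icc_subset_Icc hax hyb
  have hIoosub : Set.Ioo x y ⊆ Set.Ioo a b := Set.Ioo_subset_Ioo hax hyb
  have hIocsub : Set.Ioc x y ⊆ Set.Icc a b := fun t ht => ⟨hax.trans ht.1.le, ht.2.trans hyb⟩
  -- measurability and integrability of f'
  have hf'meas : AEStronglyMeasurable f' (volume.restrict (Set.Icc a b)) := by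
    have h1 : volume.restrict (Set.Icc a b) = volume.restrict (Set.Ioo a b) :=
      (Measure.restrict_congr_set Ioo_ae_eq_Icc).symm
    rw [h1]
    refine (measurable_deriv f).aestronglyMeasurable.congr ?_
    filter_upwards [self_mem_ae_restrict measurableSet_Ioo] with t ht
    exact (hderiv t ht).deriv
  have hf'int : IntegrableOn f' (Set.Icc a b) := by
    have hbint : IntegrableOn (fun t => (1 + (f' t)^2)/2) (Set.Icc a b) :=
      ((integrableOn_const measure_Icc_lt_top.ne).add hf'2).div_const 2
    refine hbint.mono' hf'meas ?_
    filter_upwards with t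
    rw [Real.norm_eq_abs]
    nlinarith [sq_abs (f' t), sq_nonneg (|f' t| - 1), abs_nonneg (f' t)]
  have hfint : IntegrableOn f (Set.Icc a b) :=
    ContinuousOn.integrableOn_compact' isCompact_Icc measurableSet_Icc hf
  set J : ℝ := ∫ t in a..b, (f' t)^2 with hJdef
  have hJeq : J = ∫ t in Set.Ioc a b, (f' t)^2 := intervalIntegral.integral_of_le hab.le
  have hJ0 : 0 ≤ J := by
    rw [hJeq]; exact setIntegral_nonneg measurableSet_Ioc fun t _ => sq_nonneg _
  -- the key estimate for each ε > 0
  have key : ∀ ε ∈ Set.Ioi (0:ℝ),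
      |(f x + ε) ^ ((3:ℝ)/2) - (f y + ε) ^ ((3:ℝ)/2)| ≤
        3/2 * (y - x) ^ ((1:ℝ)/4) * (∫ t in Set.Icc a b, (f t + ε)^2) ^ ((1:ℝ)/4)
          * J ^ ((1:ℝ)/2) := by
    intro ε hε
    rw [Set.mem_Ioi] at hε
    have hupos : ∀ t ∈ Set.Icc a b, 0 < f t + ε := fun t ht =>
      add_pos_of_nonneg_of_pos (hnonneg t ht) hε
    set g : ℝ → ℝ := fun s => (f s + ε) ^ ((3:ℝ)/2) with hgdef
    set g' : ℝ → ℝ := fun s => 3/2 * (f s + ε) ^ ((1:ℝ)/2) * f' s with hg'def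
    have hgder : ∀ t ∈ Set.Ioo x y, HasDerivAt g (g' t) t := by
      intro t ht
      have htab : t ∈ Set.Icc a b := Set.Ioo_subset_Icc_self (hIoosub ht)
      have h1 : HasDerivAt (fun s => f s + ε) (f' t) t := (hderiv t (hIoosub ht)).add_const ε
      have h2 : HasDerivAt (fun z : ℝ => z ^ ((3:ℝ)/2))
          (((3:ℝ)/2) * (f t + ε) ^ ((3:ℝ)/2 - 1)) (f t + ε) :=
        Real.hasDerivAt_rpow_const (Or.inl (hupos t htab).ne')
      have h3 := h2.comp t h1
      have he : ((3:ℝ)/2 - 1) = (1:ℝ)/2 := by norm_num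
      rw [he] at h3
      exact h3
    have hcont12 : ContinuousOn (fun s => (f s + ε) ^ ((1:ℝ)/2)) (Set.Icc a b) :=
      (hf.add continuousOn_const).rpow_const (fun t ht => Or.inr (by norm_num))
    have hgcont : ContinuousOn g (Set.Icc x y) :=
      (((hf.mono hIccsub).add continuousOn_const).rpow_const (fun t ht => Or.inr (by norm_num)))
    have hg'int : IntervalIntegrable g' volume x y := by
      rw [intervalIntegrable_iff_integrableOn_Icc_of_le hxy']
      exact IntegrableOn.continuousOn_mul
        (continuousOn_const.mul (hcont12.mono hIccsub)) (hf'int.mono_set hIccsub) isCompact_Icc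
    have hftc := intervalIntegral.integral_eq_sub_of_hasDerivAt_of_le hxy' hgcont hgder hg'int
    -- first Cauchy-Schwarz
    set μ := volume.restrict (Set.Ioc x y) with hμdef
    have haein : ∀ᵐ t ∂μ, t ∈ Set.Ioc x y := self_mem_ae_restrict measurableSet_Ioc
    have hmono : μ ≤ volume.restrict (Set.Icc a b) := Measure.restrict_mono hIocsub le_rfl
    have hu2 : MemLp (fun t => (f t + ε) ^ ((1:ℝ)/2)) 2 μ := by
      refine (memLp_two_iff_integrable_sq ?_).2 ?_
      · exact (hcont12.aestronglyMeasurable measurableSet_Icc).mono_measure hmono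
      · have : IntegrableOn (fun t => ((f t + ε) ^ ((1:ℝ)/2))^2) (Set.Icc x y) :=
          ContinuousOn.integrableOn_compact' isCompact_Icc measurableSet_Icc
            (((hcont12.mono hIccsub)).pow 2)
        exact this.mono_set Set.Ioc_subset_Icc_self
    have hv2 : MemLp (fun t => |f' t|) 2 μ := by
      refine (memLp_two_iff_integrable_sq ?_).2 ?_
      · have := (hf'meas.mono_measure hmono).norm
        simpa [Real.norm_eq_abs] using this
      · refine ((hf'2.mono_set hIocsub).congr ?_)
        filter_upwards with t using (sq_abs (f' t)).symm
    have hcs1 := cs_sq (μ := μ)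
      (by filter_upwards [haein] with t ht using Real.rpow_nonneg (hupos t (hIocsub ht)).le _)
      (Filter.Eventually.of_forall fun t => abs_nonneg _) hu2 hv2
    have hsq1 : ∫ t, ((f t + ε) ^ ((1:ℝ)/2))^2 ∂μ = ∫ t, (f t + ε) ∂μ := by
      refine integral_congr_ae ?_
      filter_upwards [haein] with t ht
      rw [← Real.rpow_natCast ((f t + ε) ^ ((1:ℝ)/2)) 2, ← Real.rpow_mul (hupos t (hIocsub ht)).le]
      norm_num
    have hsq2 : ∫ t, (|f' t|)^2 ∂μ = ∫ t, (f' t)^2 ∂μ := by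
      refine integral_congr_ae (Filter.Eventually.of_forall fun t => sq_abs _)
    rw [hsq1, hsq2] at hcs1
    -- bound the difference
    have habs : |f x + ε| = f x + ε := abs_of_pos (hupos x ⟨hax, hxb⟩)
    have step1 : |(f x + ε) ^ ((3:ℝ)/2) - (f y + ε) ^ ((3:ℝ)/2)| ≤
        3/2 * (∫ t, (f t + ε) ∂μ) ^ ((1:ℝ)/2) * (∫ t, (f' t)^2 ∂μ) ^ ((1:ℝ)/2) := by
      have h1 : |g x - g y| = |∫ t in x..y, g' t| := by rw [hftc, abs_sub_comm]
      have h2 : |∫ t in x..y, g' t| ≤ ∫ t in x..y, |g' t| :=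
        intervalIntegral.abs_integral_le_integral_abs hxy'
      have h3 : ∫ t in x..y, |g' t| = ∫ t in Set.Ioc x y, |g' t| :=
        intervalIntegral.integral_of_le hxy'
      have h4 : ∫ t in Set.Ioc x y, |g' t| =
          3/2 * ∫ t, ((f t + ε) ^ ((1:ℝ)/2)) * |f' t| ∂μ := by
        rw [← integral_const_mul]
        refine integral_congr_ae ?_
        filter_upwards [haein] with t ht
        have h5 : (0:ℝ) ≤ 3/2 * (f t + ε) ^ ((1:ℝ)/2) :=
          mul_nonneg (by norm_num) (Real.rpow_nonneg (hupos t (hIocsub ht)).le _)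
        rw [hg'def]
        simp only
        rw [abs_mul, abs_of_nonneg h5, mul_assoc]
      calc |(f x + ε) ^ ((3:ℝ)/2) - (f y + ε) ^ ((3:ℝ)/2)| = |g x - g y| := rfl
        _ ≤ ∫ t in x..y, |g' t| := h1 ▸ h2
        _ = 3/2 * ∫ t, ((f t + ε) ^ ((1:ℝ)/2)) * |f' t| ∂μ := by rw [h3, h4]
        _ ≤ 3/2 * ((∫ t, (f t + ε) ∂μ) ^ ((1:ℝ)/2) * (∫ t, (f' t)^2 ∂μ) ^ ((1:ℝ)/2)) := by
            exact mul_le_mul_of_nonneg_left hcs1 (by norm_num)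
        _ = 3/2 * (∫ t, (f t + ε) ∂μ) ^ ((1:ℝ)/2) * (∫ t, (f' t)^2 ∂μ) ^ ((1:ℝ)/2) := by ring
    -- second Cauchy-Schwarz : ∫ (f+ε) ≤ (y-x)^{1/2} * (∫ (f+ε)^2)^{1/2}
    have hfe2int : IntegrableOn (fun t => (f t + ε)^2) (Set.Icc a b) :=
      ContinuousOn.integrableOn_compact' isCompact_Icc measurableSet_Icc
        ((hf.add continuousOn_const).pow 2)
    have hu1 : MemLp (fun t => f t + ε) 2 μ := by
      refine (memLp_two_iff_integrable_sq ?_).2 ?_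
      · exact (((hf.add continuousOn_const).aestronglyMeasurable
          measurableSet_Icc).mono_measure hmono)
      · exact (hfe2int.mono_set hIocsub)
    have hcs2 := cs_sq (μ := μ)
      (by filter_upwards [haein] with t ht using (hupos t (hIocsub ht)).le)
      (Filter.Eventually.of_forall fun _ => zero_le_one) hu1 (memLp_const 1)
    have hone : ∫ t, (1:ℝ)^2 ∂μ = y - x := by
      simp [hμdef, Real.volume_Ioc, ENNReal.toReal_ofReal (sub_nonneg.2 hxy'), hxy']
    have hmul1 : ∫ t, (f t + ε) * 1 ∂μ = ∫ t, (f t + ε) ∂μ := by simp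
    rw [hmul1, hone] at hcs2
    -- monotonicity of the integrals
    have hC0 : 0 ≤ ∫ t in Set.Icc a b, (f t + ε)^2 :=
      setIntegral_nonneg measurableSet_Icc fun t _ => sq_nonneg _
    have hmono1 : ∫ t, (f t + ε)^2 ∂μ ≤ ∫ t in Set.Icc a b, (f t + ε)^2 :=
      setIntegral_mono_set hfe2int (Filter.Eventually.of_forall fun t => sq_nonneg _)
        (HasSubset.Subset.eventuallyLE hIocsub)
    have hmono2 : ∫ t, (f' t)^2 ∂μ ≤ J := by
      rw [hJeq]
      exact setIntegral_mono_set (hf'2.mono_set Set.Ioc_subset_Icc_self)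
        (Filter.Eventually.of_forall fun t => sq_nonneg _)
        (HasSubset.Subset.eventuallyLE (Set.Ioc_subset_Ioc hax hyb))
    -- combine
    have hA0 : 0 ≤ ∫ t, (f t + ε) ∂μ :=
      setIntegral_nonneg measurableSet_Ioc fun t ht => (hupos t (hIocsub ht)).le
    have hB0 : 0 ≤ ∫ t, (f' t)^2 ∂μ :=
      setIntegral_nonneg measurableSet_Ioc fun t _ => sq_nonneg _
    have hyx0 : (0:ℝ) ≤ y - x := sub_nonneg.2 hxy'
    have hstep2 : (∫ t, (f t + ε) ∂μ) ^ ((1:ℝ)/2) ≤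
        (y - x) ^ ((1:ℝ)/4) * (∫ t in Set.Icc a b, (f t + ε)^2) ^ ((1:ℝ)/4) := by
      have h0 : ∫ t, (f t + ε) ∂μ ≤
          ((∫ t in Set.Icc a b, (f t + ε)^2) ^ ((1:ℝ)/2)) * (y - x) ^ ((1:ℝ)/2) := by
        refine hcs2.trans ?_
        exact mul_le_mul_of_nonneg_right (Real.rpow_le_rpow
          (setIntegral_nonneg measurableSet_Ioc fun t _ => sq_nonneg _) hmono1 (by norm_num))
          (Real.rpow_nonneg hyx0 _)
      have h1 := Real.rpow_le_rpow hA0 h0 (by norm_num : (0:ℝ) ≤ 1/2)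
      refine h1.trans_eq ?_
      rw [Real.mul_rpow (Real.rpow_nonneg hC0 _) (Real.rpow_nonneg hyx0 _),
        ← Real.rpow_mul hC0, ← Real.rpow_mul hyx0]
      norm_num [mul_comm]
    have hstep3 : (∫ t, (f' t)^2 ∂μ) ^ ((1:ℝ)/2) ≤ J ^ ((1:ℝ)/2) :=
      Real.rpow_le_rpow hB0 hmono2 (by norm_num)
    refine step1.trans ?_
    calc 3/2 * (∫ t, (f t + ε) ∂μ) ^ ((1:ℝ)/2) * (∫ t, (f' t)^2 ∂μ) ^ ((1:ℝ)/2)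
        ≤ 3/2 * ((y - x) ^ ((1:ℝ)/4) * (∫ t in Set.Icc a b, (f t + ε)^2) ^ ((1:ℝ)/4))
            * J ^ ((1:ℝ)/2) := by
          refine mul_le_mul (mul_le_mul_of_nonneg_left hstep2 (by norm_num)) hstep3
            (Real.rpow_nonneg hB0 _) ?_
          positivity
      _ = 3/2 * (y - x) ^ ((1:ℝ)/4) * (∫ t in Set.Icc a b, (f t + ε)^2) ^ ((1:ℝ)/4)
            * J ^ ((1:ℝ)/2) := by ring
  -- pass to the limit ε → 0⁺
  set I2 : ℝ := ∫ t in a..b, (f t)^2 with hI2def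
  have hI2eq : ∫ t in Set.Icc a b, (f t)^2 = I2 := by
    rw [integral_Icc_eq_integral_Ioc, hI2def, intervalIntegral.integral_of_le hab.le]
  have hI20 : 0 ≤ I2 := by
    rw [← hI2eq]; exact setIntegral_nonneg measurableSet_Icc fun t _ => sq_nonneg _
  have hCexp : ∀ ε : ℝ, (∫ t in Set.Icc a b, (f t + ε)^2) =
      I2 + ε * (2 * ∫ t in Set.Icc a b, f t) + ε^2 * (b - a) := by
    intro ε
    have h1 : ∀ t, (f t + ε)^2 = (f t)^2 + ε * (2 * f t) + ε^2 := fun t => by ring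
    have hi1 : IntegrableOn (fun t => ε * (2 * f t)) (Set.Icc a b) :=
      (hfint.const_mul 2).const_mul ε
    have hi2 : IntegrableOn (fun _ : ℝ => ε^2) (Set.Icc a b) :=
      integrableOn_const measure_Icc_lt_top.ne
    calc (∫ t in Set.Icc a b, (f t + ε)^2)
        = ∫ t in Set.Icc a b, ((f t)^2 + ε * (2 * f t) + ε^2) := by
          refine integral_congr_ae (Filter.Eventually.of_forall fun t => h1 t)
      _ = (∫ t in Set.Icc a b, ((f t)^2 + ε * (2 * f t))) + ∫ t in Set.Icc a b, (ε^2 : ℝ) := by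
          exact integral_add (hf2.add hi1) hi2
      _ = (∫ t in Set.Icc a b, (f t)^2) + (∫ t in Set.Icc a b, ε * (2 * f t))
            + ∫ t in Set.Icc a b, (ε^2 : ℝ) := by rw [integral_add hf2 hi1]
      _ = I2 + ε * (2 * ∫ t in Set.Icc a b, f t) + ε^2 * (b - a) := by
          rw [hI2eq, integral_const_mul, integral_const_mul, integral_const]
          simp [Real.volume_Icc, ENNReal.toReal_ofReal (sub_nonneg.2 hab.le), smul_eq_mul, max_eq_left (sub_nonneg.2 hab.le),
            mul_comm]
  -- limits
  have htend1 : Filter.Tendsto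
      (fun ε => |(f x + ε) ^ ((3:ℝ)/2) - (f y + ε) ^ ((3:ℝ)/2)|) (nhdsWithin 0 (Set.Ioi 0))
      (nhds |f x ^ ((3:ℝ)/2) - f y ^ ((3:ℝ)/2)|) := by
    have c1 : ContinuousAt (fun ε : ℝ => (f x + ε) ^ ((3:ℝ)/2)) 0 :=
      (continuous_const.add continuous_id).continuousAt.rpow_const (Or.inr (by norm_num))
    have c2 : ContinuousAt (fun ε : ℝ => (f y + ε) ^ ((3:ℝ)/2)) 0 :=
      (continuous_const.add continuous_id).continuousAt.rpow_const (Or.inr (by norm_num))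
    have := ((c1.sub c2).abs).tendsto
    convert this.mono_left nhdsWithin_le_nhds using 2 <;> simp
  have htend2 : Filter.Tendsto
      (fun ε => 3/2 * (y - x) ^ ((1:ℝ)/4) * (∫ t in Set.Icc a b, (f t + ε)^2) ^ ((1:ℝ)/4)
        * J ^ ((1:ℝ)/2)) (nhdsWithin 0 (Set.Ioi 0))
      (nhds (3/2 * (y - x) ^ ((1:ℝ)/4) * I2 ^ ((1:ℝ)/4) * J ^ ((1:ℝ)/2))) := by
    have hCc : ContinuousAt (fun ε : ℝ => ∫ t in Set.Icc a b, (f t + ε)^2) 0 := by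
      have : ContinuousAt (fun ε : ℝ =>
          I2 + ε * (2 * ∫ t in Set.Icc a b, f t) + ε^2 * (b - a)) 0 := Continuous.continuousAt (by continuity)
      refine this.congr ?_
      filter_upwards with ε using (hCexp ε).symm
    have hCc0 : (fun ε : ℝ => I2 + ε * (2 * ∫ t in Set.Icc a b, f t) + ε^2 * (b - a)) 0 = I2 := by
      simp
    have hCval : ContinuousAt (fun ε : ℝ =>
        (∫ t in Set.Icc a b, (f t + ε)^2) ^ ((1:ℝ)/4)) 0 :=
      hCc.rpow_const (Or.inr (by norm_num))
    have hT : ContinuousAt (fun ε : ℝ => 3/2 * (y - x) ^ ((1:ℝ)/4)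
        * (∫ t in Set.Icc a b, (f t + ε)^2) ^ ((1:ℝ)/4) * J ^ ((1:ℝ)/2)) 0 :=
      (continuousAt_const.mul hCval).mul continuousAt_const
    have h0 := hT.tendsto
    have heq : (∫ t in Set.Icc a b, (f t + 0)^2) ^ ((1:ℝ)/4) = I2 ^ ((1:ℝ)/4) := by
      rw [show (∫ t in Set.Icc a b, (f t + 0)^2) = I2 by simpa using hI2eq]
    simp only [heq] at h0
    exact h0.mono_left nhdsWithin_le_nhds
  have hfinal : |f x ^ ((3:ℝ)/2) - f y ^ ((3:ℝ)/2)| ≤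
      3/2 * (y - x) ^ ((1:ℝ)/4) * I2 ^ ((1:ℝ)/4) * J ^ ((1:ℝ)/2) := by
    refine le_of_tendsto_of_tendsto htend1 htend2 ?_
    exact Filter.eventually_of_mem self_mem_nhdsWithin key
  -- rewrite the goal
  have habs : |x - y| = y - x := by rw [abs_sub_comm, abs_of_nonneg (sub_nonneg.2 hxy')]
  have hpow : (I2 ^ ((1:ℝ)/2)) ^ ((1:ℝ)/2) = I2 ^ ((1:ℝ)/4) := by
    rw [← Real.rpow_mul hI20]; norm_num
  rw [habs, hpow]
  exact hfinal
end

section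
/- Let (z_κ) for κ ∈ {1/2, 3/2, …, K−1/2} be positive reals defined by z_κ = δ/(x_{κ+1/2} − x_{κ−1/2}), where a = x₀ < x₁ < ⋯ < x_K = b and δ = M/K with M > 0. Then every z_κ satisfies z_κ ≥ δ/(b−a), and for every q > 1, z_κ ≤ M^{1−1/q} (δ Σ_{k=1}^{K−1} |(z_{k+1/2} − z_{k−1/2})/δ|^q)^{1/q} + M/(b−a). -/
/-- Bounds on the piecewise-constant density values of a Lagrangian discretization.
Here `z k` corresponds to `z_{k+1/2}` for `k = 0, …, K-1`. -/
theorem density_values_bounds (a b M : ℝ) (hab : a < b) (hM : 0 < M)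
    (K : ℕ) (hK : 1 ≤ K) (δ : ℝ) (hδ : δ = M / K)
    (x : ℕ → ℝ) (hmono : ∀ k < K, x k < x (k + 1))
    (h0 : x 0 = a) (hKb : x K = b)
    (z : ℕ → ℝ) (hz : ∀ k < K, z k = δ / (x (k + 1) - x k)) :
    ∀ κ < K, δ / (b - a) ≤ z κ ∧
      ∀ q : ℝ, 1 < q →
        z κ ≤ M ^ (1 - 1/q) *
            (δ * ∑ k ∈ Finset.range (K - 1), |(z (k + 1) - z k) / δ| ^ q) ^ (1/q)
          + M / (b - a) := by
  have hK0 : (0:ℝ) < K := by exact_mod_cast hK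
  have hδ0 : 0 < δ := by rw [hδ]; positivity
  have hba : 0 < b - a := sub_pos.mpr hab
  have hd : ∀ k < K, 0 < x (k + 1) - x k := fun k hk => sub_pos.mpr (hmono k hk)
  have hz0 : ∀ k < K, 0 < z k := by
    intro k hk; rw [hz k hk]; exact div_pos hδ0 (hd k hk)
  have htel : ∑ k ∈ Finset.range K, (x (k + 1) - x k) = b - a := by
    rw [Finset.sum_range_sub, h0, hKb]
  -- lower bound on each z κ
  have hlow : ∀ κ < K, δ / (b - a) ≤ z κ := by
    intro κ hκ
    have hle : x (κ + 1) - x κ ≤ b - a := by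
      rw [← htel]
      exact Finset.single_le_sum (fun k hk => (hd k (Finset.mem_range.mp hk)).le)
        (Finset.mem_range.mpr hκ)
    rw [hz κ hκ]
    exact div_le_div_of_nonneg_left hδ0.le (hd κ hκ) hle
  -- sum of δ / z k telescopes to b - a
  have hsum : ∑ k ∈ Finset.range K, δ / z k = b - a := by
    rw [← htel]
    refine Finset.sum_congr rfl fun k hk => ?_
    have hk' := Finset.mem_range.mp hk
    rw [hz k hk']
    field_simp
  -- there is κ* with z κ* ≤ M / (b - a)
  obtain ⟨κs, hκs, hκsle⟩ : ∃ κs ∈ Finset.range K, (b - a) / K ≤ δ / z κs := by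
    apply Finset.exists_le_of_sum_le ⟨0, Finset.mem_range.mpr hK⟩
    rw [hsum, Finset.sum_const, Finset.card_range, nsmul_eq_mul,
      mul_div_cancel₀ _ hK0.ne']
  have hκsK : κs < K := Finset.mem_range.mp hκs
  have hzs : z κs ≤ M / (b - a) := by
    have h1 : (b - a) / K * z κs ≤ δ := (le_div_iff₀ (hz0 κs hκsK)).mp hκsle
    rw [le_div_iff₀ hba]
    have hδK : δ * K = M := by rw [hδ]; field_simp
    have h2 : (b - a) / K * z κs * K ≤ δ * K := mul_le_mul_of_nonneg_right h1 hK0.le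
    have h3 : (b - a) / (K:ℝ) * z κs * K = z κs * (b - a) := by field_simp
    linarith
  intro κ hκ
  refine ⟨hlow κ hκ, fun q hq => ?_⟩
  set S : ℝ := ∑ k ∈ Finset.range (K - 1), |z (k + 1) - z k| with hS
  -- telescoping bound: any two values differ by at most S
  have habsS : ∀ i j : ℕ, i ≤ j → j < K → |z j - z i| ≤ S := by
    intro i j hij hjK
    have htel2 : z j - z i = ∑ k ∈ Finset.Ico i j, (z (k + 1) - z k) := by
      rw [Finset.sum_Ico_eq_sub _ hij, Finset.sum_range_sub, Finset.sum_range_sub]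
      ring
    rw [htel2]
    refine (Finset.abs_sum_le_sum_abs _ _).trans ?_
    apply Finset.sum_le_sum_of_subset_of_nonneg
    · intro k hk
      have := Finset.mem_Ico.mp hk
      exact Finset.mem_range.mpr (by omega)
    · intro k _ _; exact abs_nonneg _
  have hA : z κ ≤ z κs + S := by
    rcases le_total κ κs with h | h
    · have := (abs_le.mp (habsS κ κs h hκsK)).1
      linarith
    · have := (abs_le.mp (habsS κs κ h hκ)).2
      linarith
  -- Hölder bound on S
  have hq1 : (1:ℝ) ≤ q := hq.le
  have hqinv : 0 ≤ 1 - q⁻¹ := by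
    have : q⁻¹ ≤ 1 := by
      rw [inv_le_one_iff₀]; right; exact hq1
    linarith
  have hB : S ≤ M ^ (1 - 1/q) *
      (δ * ∑ k ∈ Finset.range (K - 1), |(z (k + 1) - z k) / δ| ^ q) ^ (1/q) := by
    have key := Real.inner_le_weight_mul_Lp_of_nonneg (Finset.range (K - 1)) hq1
      (fun _ => δ) (fun k => |(z (k + 1) - z k) / δ|)
      (fun _ => hδ0.le) (fun _ => abs_nonneg _)
    have hLHS : ∑ k ∈ Finset.range (K - 1), δ * |(z (k + 1) - z k) / δ| = S := by
      refine Finset.sum_congr rfl fun k _ => ?_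
      rw [abs_div, abs_of_pos hδ0]
      field_simp
    have hW : ∑ _k ∈ Finset.range (K - 1), δ = (K - 1 : ℕ) * δ := by
      rw [Finset.sum_const, Finset.card_range, nsmul_eq_mul]
    have hWM : ((K - 1 : ℕ) : ℝ) * δ ≤ M := by
      have h1 : ((K - 1 : ℕ) : ℝ) ≤ (K : ℝ) := by exact_mod_cast Nat.sub_le K 1
      have h2 : (K : ℝ) * δ = M := by rw [hδ]; field_simp
      nlinarith
    have hR : ∑ k ∈ Finset.range (K - 1), δ * |(z (k + 1) - z k) / δ| ^ q
        = δ * ∑ k ∈ Finset.range (K - 1), |(z (k + 1) - z k) / δ| ^ q := by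
      rw [Finset.mul_sum]
    rw [hLHS, hW, hR] at key
    refine key.trans ?_
    rw [one_div]
    gcongr
  linarith
end

section
/- Let M, T > 0, δ > 0, and let positive reals z^n_κ (κ ∈ {1/2, …, K−1/2}, 1 ≤ n ≤ N with Nτ ≤ T) satisfy z^n_κ ≥ δ/(b−a) for all n, κ, and suppose A := τ Σ_{n=1}^∞ δ Σ_{k=1}^{K−1} ((z^n_{k+1/2} − z^n_{k−1/2})/δ)⁴ < ∞ and Σ_κ (δ/z^n_κ)⁴ ≤ (b−a)⁴ for each n. Then τ Σ_{n=1}^N δ Σ_{k=1}^{K−1} [(z^n_{k+1/2}/z^n_{k−1/2} − 1)² + (z^n_{k−1/2}/z^n_{k+1/2} − 1)²] ≤ 2(b−a)² T^{1/2} A^{1/2} δ^{1/2}. -/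
/-- Cauchy–Schwarz with a bound on the first factor, square-root form. -/
lemma cs_sqrt_aux (s : Finset ℕ) (f g : ℕ → ℝ) (hfg : ∀ i ∈ s, 0 ≤ f i * g i)
    (C : ℝ) (hC : ∑ i ∈ s, f i ^ 2 ≤ C) :
    ∑ i ∈ s, f i * g i ≤ Real.sqrt C * Real.sqrt (∑ i ∈ s, g i ^ 2) := by
  have hg2 : (0:ℝ) ≤ ∑ i ∈ s, g i ^ 2 := Finset.sum_nonneg fun i _ => sq_nonneg _
  have hC0 : (0:ℝ) ≤ C := le_trans (Finset.sum_nonneg fun i _ => sq_nonneg _) hC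
  have h1 : (∑ i ∈ s, f i * g i) ^ 2 ≤ C * ∑ i ∈ s, g i ^ 2 :=
    (Finset.sum_mul_sq_le_sq_mul_sq s f g).trans (mul_le_mul_of_nonneg_right hC hg2)
  have h2 : 0 ≤ ∑ i ∈ s, f i * g i := Finset.sum_nonneg hfg
  calc ∑ i ∈ s, f i * g i = Real.sqrt ((∑ i ∈ s, f i * g i) ^ 2) := (Real.sqrt_sq h2).symm
    _ ≤ Real.sqrt (C * ∑ i ∈ s, g i ^ 2) := Real.sqrt_le_sqrt h1
    _ = Real.sqrt C * Real.sqrt (∑ i ∈ s, g i ^ 2) := Real.sqrt_mul hC0 _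

/-- Discrete oscillation estimate: the sum of squared oscillation ratios of the
density values is controlled by `δ^{1/2}` times the fourth-power difference bound.
Here `z n k` stands for `z^n_{k+1/2}`, `k = 0, …, K-1`. -/
theorem discrete_oscillation_estimate (a b M T τ δ : ℝ) (hab : a < b)
    (hM : 0 < M) (hT : 0 < T) (hτ : 0 < τ) (hδ : 0 < δ)
    (K N : ℕ) (hNT : (N : ℝ) * τ ≤ T)
    (z : ℕ → ℕ → ℝ) (hzpos : ∀ n, ∀ k < K, 0 < z n k)
    (hzlow : ∀ n, ∀ k < K, δ / (b - a) ≤ z n k)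
    (A : ℝ)
    (hsum : Summable (fun n : ℕ => δ * ∑ k ∈ Finset.range (K - 1),
      ((z (n + 1) (k + 1) - z (n + 1) k) / δ) ^ 4))
    (hA : A = τ * ∑' n : ℕ, δ * ∑ k ∈ Finset.range (K - 1),
      ((z (n + 1) (k + 1) - z (n + 1) k) / δ) ^ 4)
    (hquart : ∀ n, ∑ k ∈ Finset.range K, (δ / z n k) ^ 4 ≤ (b - a) ^ 4) :
    τ * ∑ n ∈ Finset.Icc 1 N, δ * ∑ k ∈ Finset.range (K - 1),
        ((z n (k + 1) / z n k - 1) ^ 2 + (z n k / z n (k + 1) - 1) ^ 2)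
      ≤ 2 * (b - a) ^ 2 * T ^ ((1:ℝ)/2) * A ^ ((1:ℝ)/2) * δ ^ ((1:ℝ)/2) := by
  have hba : (0:ℝ) < b - a := sub_pos.2 hab
  set Q : ℕ → ℝ := fun n => ∑ k ∈ Finset.range (K - 1),
      ((z n (k + 1) - z n k) / δ) ^ 4 with hQdef
  have hQnn : ∀ n, 0 ≤ Q n := fun n => Finset.sum_nonneg fun k _ => by positivity
  -- the inner (in k) Cauchy–Schwarz estimate
  have inner : ∀ n, (∑ k ∈ Finset.range (K - 1),
      ((z n (k + 1) / z n k - 1) ^ 2 + (z n k / z n (k + 1) - 1) ^ 2))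
      ≤ 2 * (b - a) ^ 2 * Real.sqrt (Q n) := by
    intro n
    have hk1 : ∀ k ∈ Finset.range (K - 1), k < K := by
      intro k hk; have := Finset.mem_range.1 hk; omega
    have hk2 : ∀ k ∈ Finset.range (K - 1), k + 1 < K := by
      intro k hk; have := Finset.mem_range.1 hk; omega
    have hrw : ∀ k ∈ Finset.range (K - 1),
        (z n (k + 1) / z n k - 1) ^ 2 + (z n k / z n (k + 1) - 1) ^ 2
        = (δ / z n k) ^ 2 * ((z n (k + 1) - z n k) / δ) ^ 2
          + (δ / z n (k + 1)) ^ 2 * ((z n (k + 1) - z n k) / δ) ^ 2 := by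
      intro k hk
      have h1 := (hzpos n k (hk1 k hk)).ne'
      have h2 := (hzpos n (k + 1) (hk2 k hk)).ne'
      field_simp
      ring
    rw [Finset.sum_congr rfl hrw, Finset.sum_add_distrib]
    have hQsq : ∑ k ∈ Finset.range (K - 1), (((z n (k + 1) - z n k) / δ) ^ 2) ^ 2 = Q n := by
      refine Finset.sum_congr rfl fun k _ => by ring
    have hC1 : ∑ k ∈ Finset.range (K - 1), ((δ / z n k) ^ 2) ^ 2 ≤ (b - a) ^ 4 := by
      calc ∑ k ∈ Finset.range (K - 1), ((δ / z n k) ^ 2) ^ 2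
          = ∑ k ∈ Finset.range (K - 1), (δ / z n k) ^ 4 :=
            Finset.sum_congr rfl fun k _ => by ring
        _ ≤ ∑ k ∈ Finset.range K, (δ / z n k) ^ 4 :=
            Finset.sum_le_sum_of_subset_of_nonneg
              (Finset.range_subset_range.2 (Nat.sub_le K 1)) (fun k _ _ => by positivity)
        _ ≤ (b - a) ^ 4 := hquart n
    have hC2 : ∑ k ∈ Finset.range (K - 1), ((δ / z n (k + 1)) ^ 2) ^ 2 ≤ (b - a) ^ 4 := by
      calc ∑ k ∈ Finset.range (K - 1), ((δ / z n (k + 1)) ^ 2) ^ 2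
          = ∑ k ∈ (Finset.range (K - 1)).image (· + 1), (δ / z n k) ^ 4 := by
            rw [Finset.sum_image (by intro x _ y _ h; exact Nat.add_right_cancel h)]
            exact Finset.sum_congr rfl fun k _ => by ring
        _ ≤ ∑ k ∈ Finset.range K, (δ / z n k) ^ 4 := by
            refine Finset.sum_le_sum_of_subset_of_nonneg ?_ (fun k _ _ => by positivity)
            intro k hk
            simp only [Finset.mem_image, Finset.mem_range] at hk ⊢
            omega
        _ ≤ (b - a) ^ 4 := hquart n
    have hsqrtC : Real.sqrt ((b - a) ^ 4) = (b - a) ^ 2 := by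
      rw [show (b - a) ^ 4 = ((b - a) ^ 2) ^ 2 by ring, Real.sqrt_sq (sq_nonneg _)]
    have cs1 := cs_sqrt_aux (Finset.range (K - 1)) (fun k => (δ / z n k) ^ 2)
      (fun k => ((z n (k + 1) - z n k) / δ) ^ 2)
      (fun k _ => by positivity) ((b - a) ^ 4) hC1
    have cs2 := cs_sqrt_aux (Finset.range (K - 1)) (fun k => (δ / z n (k + 1)) ^ 2)
      (fun k => ((z n (k + 1) - z n k) / δ) ^ 2)
      (fun k _ => by positivity) ((b - a) ^ 4) hC2
    rw [hQsq, hsqrtC] at cs1 cs2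
    calc _ ≤ (b - a) ^ 2 * Real.sqrt (Q n) + (b - a) ^ 2 * Real.sqrt (Q n) :=
          add_le_add cs1 cs2
      _ = 2 * (b - a) ^ 2 * Real.sqrt (Q n) := by ring
  -- summability and the value of the tail sum
  set t : ℝ := ∑' n : ℕ, Q (n + 1) with ht
  have hsum' : Summable (fun n : ℕ => Q (n + 1)) := by
    have h := hsum.mul_left δ⁻¹
    simpa [hQdef, ← mul_assoc, inv_mul_cancel₀ hδ.ne'] using h
  have htnn : 0 ≤ t := tsum_nonneg fun n => hQnn _
  have hAt : A = τ * δ * t := by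
    rw [hA, tsum_mul_left]; ring
  -- partial sum bound
  have hpartial : ∑ n ∈ Finset.Icc 1 N, Q n ≤ t := by
    have heq : ∑ n ∈ Finset.Icc 1 N, Q n = ∑ i ∈ Finset.range N, Q (i + 1) := by
      rw [← Finset.Ico_add_one_right_eq_Icc, Finset.sum_Ico_eq_sum_range]
      simp [add_comm]
    rw [heq]
    exact Summable.sum_le_tsum (Finset.range N) (fun i _ => hQnn _) hsum'
  -- outer Cauchy–Schwarz
  have houter : ∑ n ∈ Finset.Icc 1 N, Real.sqrt (Q n)
      ≤ Real.sqrt N * Real.sqrt t := by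
    have h := cs_sqrt_aux (Finset.Icc 1 N) (fun _ => (1:ℝ)) (fun n => Real.sqrt (Q n))
      (fun i _ => by positivity) (N : ℝ) (by simp [Nat.card_Icc])
    simp only [one_mul] at h
    have hg : ∑ n ∈ Finset.Icc 1 N, Real.sqrt (Q n) ^ 2 = ∑ n ∈ Finset.Icc 1 N, Q n :=
      Finset.sum_congr rfl fun n _ => Real.sq_sqrt (hQnn n)
    rw [hg] at h
    exact h.trans (mul_le_mul_of_nonneg_left (Real.sqrt_le_sqrt hpartial)
      (Real.sqrt_nonneg _))
  -- assemble
  have hmain : τ * ∑ n ∈ Finset.Icc 1 N, δ * ∑ k ∈ Finset.range (K - 1),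
        ((z n (k + 1) / z n k - 1) ^ 2 + (z n k / z n (k + 1) - 1) ^ 2)
      ≤ 2 * (b - a) ^ 2 * (τ * δ * Real.sqrt N * Real.sqrt t) := by
    have h1 : ∑ n ∈ Finset.Icc 1 N, δ * ∑ k ∈ Finset.range (K - 1),
          ((z n (k + 1) / z n k - 1) ^ 2 + (z n k / z n (k + 1) - 1) ^ 2)
        ≤ ∑ n ∈ Finset.Icc 1 N, δ * (2 * (b - a) ^ 2 * Real.sqrt (Q n)) :=
      Finset.sum_le_sum fun n _ => mul_le_mul_of_nonneg_left (inner n) hδ.le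
    have h2 : ∑ n ∈ Finset.Icc 1 N, δ * (2 * (b - a) ^ 2 * Real.sqrt (Q n))
        = δ * (2 * (b - a) ^ 2) * ∑ n ∈ Finset.Icc 1 N, Real.sqrt (Q n) := by
      rw [Finset.mul_sum]; exact Finset.sum_congr rfl fun n _ => by ring
    calc τ * ∑ n ∈ Finset.Icc 1 N, δ * ∑ k ∈ Finset.range (K - 1),
          ((z n (k + 1) / z n k - 1) ^ 2 + (z n k / z n (k + 1) - 1) ^ 2)
        ≤ τ * (δ * (2 * (b - a) ^ 2) * ∑ n ∈ Finset.Icc 1 N, Real.sqrt (Q n)) := by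
          rw [← h2]; exact mul_le_mul_of_nonneg_left h1 hτ.le
      _ ≤ τ * (δ * (2 * (b - a) ^ 2) * (Real.sqrt N * Real.sqrt t)) := by
          refine mul_le_mul_of_nonneg_left (mul_le_mul_of_nonneg_left houter ?_) hτ.le
          positivity
      _ = 2 * (b - a) ^ 2 * (τ * δ * Real.sqrt N * Real.sqrt t) := by ring
  -- rewrite the RHS with square roots and finish
  have hrpow : ∀ x : ℝ, x ^ ((1:ℝ)/2) = Real.sqrt x := fun x => (Real.sqrt_eq_rpow x).symm
  rw [hrpow, hrpow, hrpow, hAt]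
  refine hmain.trans ?_
  have key : τ * δ * Real.sqrt N * Real.sqrt t
      ≤ Real.sqrt T * Real.sqrt (τ * δ * t) * Real.sqrt δ := by
    calc τ * δ * Real.sqrt N * Real.sqrt t
        = Real.sqrt ((τ * δ) ^ 2) * Real.sqrt N * Real.sqrt t := by
          rw [Real.sqrt_sq (by positivity)]
      _ = Real.sqrt ((τ * δ) ^ 2 * N * t) := by
          rw [← Real.sqrt_mul (by positivity), ← Real.sqrt_mul (by positivity)]
      _ = Real.sqrt ((N * τ) * (τ * δ * t) * δ) := by ring_nf
      _ = Real.sqrt (N * τ) * Real.sqrt (τ * δ * t) * Real.sqrt δ := by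
          rw [Real.sqrt_mul (by positivity), Real.sqrt_mul (by positivity)]
      _ ≤ Real.sqrt T * Real.sqrt (τ * δ * t) * Real.sqrt δ := by
          gcongr
  calc 2 * (b - a) ^ 2 * (τ * δ * Real.sqrt N * Real.sqrt t)
      ≤ 2 * (b - a) ^ 2 * (Real.sqrt T * Real.sqrt (τ * δ * t) * Real.sqrt δ) := by
        refine mul_le_mul_of_nonneg_left key (by positivity)
    _ = 2 * (b - a) ^ 2 * Real.sqrt T * Real.sqrt (τ * δ * t) * Real.sqrt δ := by ring
end
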